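/- arXiv:2006.02061 — 3 statements merged into one kernel-verified Lean document; each statement's English description precedes it below -/
import Mathlib

section
/- For any elements u, v, w of a real inner product space, -⟪(3/2)•v - (1/2)•w, u - v⟫ ≥ -(1/2)‖u‖² + (1/2)‖v‖² + (1/4)‖u - v‖² - (1/4)‖v - w‖². -/
/-! Split the extrapolation as `(3/2) v - (1/2) w = v + (1/2) (v - w)`. The term `-⟪v, u - v⟫`
is exactly `(‖v‖² - ‖u‖² + ‖u - v‖²) / 2` by polarization, and the remaining cross term
`-(1/2) ⟪v - w, u - v⟫` is bounded below by `-(1/4) (‖v - w‖² + ‖u - v‖²)` by Young's inequality;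
half of the `‖u - v‖²` gained from the first term pays for the second. -/

open scoped RealInnerProductSpace

section

variable {E : Type*} [NormedAddCommGroup E] [InnerProductSpace ℝ E]

theorem two_mul_real_inner_le_norm_sq_add_norm_sq (x y : E) :
    2 * ⟪x, y⟫ ≤ ‖x‖ ^ 2 + ‖y‖ ^ 2 := by
  have hsub := norm_sub_sq_real x y
  linarith [sq_nonneg ‖x - y‖]

theorem neg_real_inner_sub_eq (u v : E) :
    -⟪v, u - v⟫ = (‖v‖ ^ 2 - ‖u‖ ^ 2 + ‖u - v‖ ^ 2) / 2 := by
  have hadd := norm_add_sq_real v (u - v)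
  rw [add_sub_cancel] at hadd
  linarith

end

theorem extrapolation_inner_inequality {E : Type*} [NormedAddCommGroup E]
    [InnerProductSpace ℝ E] (u v w : E) :
    -(inner ℝ ((3 / 2 : ℝ) • v - (1 / 2 : ℝ) • w) (u - v) : ℝ) ≥
      -(1 / 2) * ‖u‖ ^ 2 + (1 / 2) * ‖v‖ ^ 2 + (1 / 4) * ‖u - v‖ ^ 2
        - (1 / 4) * ‖v - w‖ ^ 2 := by
  have hsplit : (3 / 2 : ℝ) • v - (1 / 2 : ℝ) • w = v + (1 / 2 : ℝ) • (v - w) := by module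
  have hyoung := two_mul_real_inner_le_norm_sq_add_norm_sq (v - w) (u - v)
  rw [hsplit, inner_add_left, real_inner_smul_left, neg_add, neg_real_inner_sub_eq]
  linarith
end

section
/- Let 0 < α < 1 and T > 0. The kernel ω_{1-α}(t) = t^{-α}/Γ(1-α) is positive semi-definite: for every continuous (or piecewise continuous) function w : [0,T] → ℝ, ∫₀ᵀ w(t) ∫₀ᵗ ω_{1-α}(t-s) w(s) ds dt ≥ 0. -/
/-!
For `0 < α`, `x ^ (-α) = Γ(α)⁻¹ ∫₀^∞ r ^ (α - 1) e^{-r x} dr`, so the quadratic form of the kernel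
`(t - s) ^ (-α)` is a superposition, with positive weights `r ^ (α - 1)`, of the quadratic forms
of the exponential kernels `e^{-r (t - s)}`. Each of these is nonnegative: with
`F t = ∫₀ᵗ e^{r s} w s ds` one has `w t ∫₀ᵗ e^{-r (t - s)} w s ds = e^{-2 r t} F t F' t`, and
integration by parts turns its integral over `[0, T]` into
`(e^{-2 r T} F(T)² + 2 r ∫₀ᵀ e^{-2 r t} F(t)² dt) / 2 ≥ 0`.
Exchanging the `r`- and `t`-integrals is justified by the bound
`|∫₀ᵗ e^{-r (t - s)} w s ds| ≤ (sup_{[0,T]} |w|) * min T r⁻¹`, which is integrable against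
`r ^ (α - 1)` on `(0, ∞)` because `0 < α < 1`.
-/

open intervalIntegral Real MeasureTheory Set

lemma integral_Ioi_rpow_mul_exp_neg_mul {α x : ℝ} (hα : 0 < α) (hx : 0 < x) :
    ∫ r in Ioi (0:ℝ), r ^ (α - 1) * exp (-(x * r)) = Gamma α * x ^ (-α) := by
  rw [integral_rpow_mul_exp_neg_mul_Ioi hα hx, one_div, inv_rpow hx.le, ← rpow_neg hx.le,
    mul_comm]

lemma integrableOn_Ioi_rpow_mul_exp_neg_mul {α x : ℝ} (hα : 0 < α) (hx : 0 < x) :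
    IntegrableOn (fun r : ℝ => r ^ (α - 1) * exp (-(x * r))) (Ioi 0) := by
  simpa [rpow_one] using
    integrableOn_rpow_mul_exp_neg_mul_rpow (by linarith : (-1:ℝ) < α - 1) zero_lt_one hx

lemma intervalIntegrable_sub_rpow {β : ℝ} (hβ : -1 < β) (t a b : ℝ) :
    IntervalIntegrable (fun s => (t - s) ^ β) volume a b := by
  simpa using (intervalIntegrable_rpow' (a := t - a) (b := t - b) hβ).comp_sub_left t

lemma integrable_rpow_mul_exp_neg_sub_mul_prod {α t : ℝ} {w : ℝ → ℝ} (hα : 0 < α) (hα1 : α < 1)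
    (hw : Continuous w) (ht : 0 ≤ t) :
    Integrable (Function.uncurry fun s r => r ^ (α - 1) * exp (-((t - s) * r)) * w s)
      ((volume.restrict (Ioo 0 t)).prod (volume.restrict (Ioi 0))) := by
  rw [integrable_prod_iff (by fun_prop)]
  constructor
  · filter_upwards [ae_restrict_mem measurableSet_Ioo] with s hs
    exact (integrableOn_Ioi_rpow_mul_exp_neg_mul hα (sub_pos.2 hs.2)).mul_const (w s)
  · have hker : IntegrableOn (fun s => (t - s) ^ (-α) * |w s|) (Icc 0 t) :=
      ((intervalIntegrable_iff_integrableOn_Icc_of_le ht).1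
        (intervalIntegrable_sub_rpow (by linarith) t 0 t)).mul_continuousOn
        hw.abs.continuousOn isCompact_Icc
    refine ((hker.mono_set Ioo_subset_Icc_self).const_mul (Gamma α)).congr ?_
    filter_upwards [ae_restrict_mem measurableSet_Ioo] with s hs
    have hpos : ∀ r ∈ Ioi (0:ℝ), ‖r ^ (α - 1) * exp (-((t - s) * r))‖
        = r ^ (α - 1) * exp (-((t - s) * r)) := fun r hr =>
      Real.norm_of_nonneg (mul_nonneg (rpow_nonneg (le_of_lt hr) _) (exp_pos _).le)
    simp only [Function.uncurry_apply_pair, norm_mul (_ * _), MeasureTheory.integral_mul_const]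
    rw [setIntegral_congr_fun measurableSet_Ioi hpos,
      integral_Ioi_rpow_mul_exp_neg_mul hα (sub_pos.2 hs.2), Real.norm_eq_abs, mul_assoc]

noncomputable def expKernelConv (r : ℝ) (w : ℝ → ℝ) (t : ℝ) : ℝ :=
  ∫ s in (0:ℝ)..t, exp (-((t - s) * r)) * w s

lemma continuous_expKernelConv {w : ℝ → ℝ} (hw : Continuous w) :
    Continuous fun p : ℝ × ℝ => expKernelConv p.1 w p.2 :=
  continuous_parametric_intervalIntegral_of_continuous
    (f := fun p s => exp (-((p.2 - s) * p.1)) * w s) (by fun_prop) continuous_snd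

lemma expKernelConv_eq_exp_mul (r : ℝ) (w : ℝ → ℝ) (t : ℝ) :
    expKernelConv r w t = exp (-(r * t)) * ∫ s in (0:ℝ)..t, exp (r * s) * w s := by
  rw [expKernelConv, ← intervalIntegral.integral_const_mul]
  congr 1 with s
  rw [← mul_assoc, ← exp_add]
  ring_nf

lemma integral_exp_neg_sub_mul {r : ℝ} (hr : r ≠ 0) (t : ℝ) :
    ∫ s in (0:ℝ)..t, exp (-((t - s) * r)) = (1 - exp (-(t * r))) / r := by
  have hderiv (s : ℝ) :
      HasDerivAt (fun u => exp (-((t - u) * r)) / r) (exp (-((t - s) * r))) s := by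
    have hlin : HasDerivAt (fun u => -((t - u) * r)) r s := by
      simpa using (((hasDerivAt_id s).const_sub t).mul_const r).fun_neg
    simpa [mul_div_cancel_right₀ _ hr] using hlin.exp.div_const r
  rw [integral_eq_sub_of_hasDerivAt (fun s _ => hderiv s)
    ((by fun_prop : Continuous _).intervalIntegrable _ _)]
  simp only [sub_self, zero_mul, neg_zero, exp_zero, sub_zero]
  ring

lemma abs_expKernelConv_le {r t M : ℝ} {w : ℝ → ℝ} (hr : 0 < r) (ht : 0 ≤ t)
    (hM : ∀ s ∈ Icc 0 t, |w s| ≤ M) : |expKernelConv r w t| ≤ M * min t r⁻¹ := by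
  have hM0 : 0 ≤ M := (abs_nonneg _).trans (hM 0 ⟨le_rfl, ht⟩)
  have hint : |expKernelConv r w t| ≤ ∫ s in (0:ℝ)..t, M * exp (-((t - s) * r)) := by
    rw [← Real.norm_eq_abs, expKernelConv]
    refine norm_integral_le_of_norm_le ht (.of_forall fun s hs => ?_)
      ((by fun_prop : Continuous fun s => M * exp (-((t - s) * r))).intervalIntegrable _ _)
    rw [norm_mul, Real.norm_of_nonneg (exp_pos _).le, mul_comm]
    exact mul_le_mul_of_nonneg_right (hM s (Ioc_subset_Icc_self hs)) (exp_pos _).le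
  rw [intervalIntegral.integral_const_mul, integral_exp_neg_sub_mul hr.ne'] at hint
  refine hint.trans (mul_le_mul_of_nonneg_left (le_min ?_ ?_) hM0)
  · rw [div_le_iff₀ hr]
    linarith [add_one_le_exp (-(t * r))]
  · rw [div_le_iff₀ hr, inv_mul_cancel₀ hr.ne']
    linarith [exp_pos (-(t * r))]

lemma integral_exp_mul_mul_deriv_nonneg {F F' : ℝ → ℝ} {c T : ℝ} (hc : 0 ≤ c) (hT : 0 ≤ T)
    (hF : ∀ t ∈ Icc 0 T, HasDerivAt F (F' t) t) (hF' : IntervalIntegrable F' volume 0 T)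
    (hF0 : F 0 = 0) :
    0 ≤ ∫ t in (0:ℝ)..T, exp (-(2 * c * t)) * (F t * F' t) := by
  have hFcont : ContinuousOn F (Icc 0 T) := fun t ht => (hF t ht).continuousAt.continuousWithinAt
  have hparts := integral_mul_deriv_eq_deriv_mul (a := 0) (b := T)
    (u := fun t => exp (-(2 * c * t))) (u' := fun t => -(2 * c) * exp (-(2 * c * t)))
    (v := fun t => F t ^ 2) (v' := fun t => 2 * (F t * F' t))
    (fun t _ => by simpa [mul_comm] using (((hasDerivAt_id t).const_mul (2 * c)).neg.exp))
    (fun t ht => by simpa [mul_assoc] using (hF t (by rwa [uIcc_of_le hT] at ht)).fun_pow 2)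
    ((by fun_prop : Continuous _).intervalIntegrable _ _)
    ((hF'.continuousOn_mul (uIcc_of_le hT ▸ hFcont)).const_mul 2)
  have hdecay : 0 ≤ -∫ t in (0:ℝ)..T, -(2 * c) * exp (-(2 * c * t)) * F t ^ 2 := by
    rw [← intervalIntegral.integral_neg]
    exact integral_nonneg hT fun t _ => by
      have : 0 ≤ 2 * c * exp (-(2 * c * t)) * F t ^ 2 := by positivity
      simpa only [neg_mul, neg_neg] using this
  have hhalf : ∫ t in (0:ℝ)..T, exp (-(2 * c * t)) * (F t * F' t)
      = (∫ t in (0:ℝ)..T, exp (-(2 * c * t)) * (2 * (F t * F' t))) / 2 := by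
    rw [← intervalIntegral.integral_div]
    congr 1 with t
    ring
  rw [hhalf, hparts, hF0]
  have hboundary : 0 ≤ exp (-(2 * c * T)) * F T ^ 2 := by positivity
  linarith

lemma integral_mul_expKernelConv_nonneg {r T : ℝ} {w : ℝ → ℝ} (hw : Continuous w) (hr : 0 ≤ r)
    (hT : 0 ≤ T) : 0 ≤ ∫ t in (0:ℝ)..T, w t * expKernelConv r w t := by
  have hcont : Continuous fun s => exp (r * s) * w s := by fun_prop
  have hF (t : ℝ) :
      HasDerivAt (fun t => ∫ s in (0:ℝ)..t, exp (r * s) * w s) (exp (r * t) * w t) t :=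
    integral_hasDerivAt_right (hcont.intervalIntegrable _ _)
      (hcont.stronglyMeasurableAtFilter _ _) hcont.continuousAt
  have hintegrand : (fun t => w t * expKernelConv r w t) = fun t =>
      exp (-(2 * r * t)) * ((∫ s in (0:ℝ)..t, exp (r * s) * w s) * (exp (r * t) * w t)) := by
    ext t
    rw [expKernelConv_eq_exp_mul, show -(r * t) = -(2 * r * t) + r * t by ring, exp_add]
    ring
  rw [hintegrand]
  exact integral_exp_mul_mul_deriv_nonneg hr hT (fun t _ => hF t) (hcont.intervalIntegrable _ _)
    integral_same

lemma Gamma_mul_integral_sub_rpow_neg_mul_eq {α t : ℝ} {w : ℝ → ℝ} (hα : 0 < α) (hα1 : α < 1)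
    (hw : Continuous w) (ht : 0 ≤ t) :
    Gamma α * ∫ s in (0:ℝ)..t, (t - s) ^ (-α) * w s
      = ∫ r in Ioi (0:ℝ), r ^ (α - 1) * expKernelConv r w t := by
  have hIoo : ∀ f : ℝ → ℝ, ∫ s in (0:ℝ)..t, f s = ∫ s in Ioo 0 t, f s := fun f => by
    rw [integral_of_le ht, integral_Ioc_eq_integral_Ioo]
  calc Gamma α * ∫ s in (0:ℝ)..t, (t - s) ^ (-α) * w s
      = ∫ s in Ioo 0 t, ∫ r in Ioi (0:ℝ), r ^ (α - 1) * exp (-((t - s) * r)) * w s := by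
        rw [hIoo, ← MeasureTheory.integral_const_mul]
        refine setIntegral_congr_fun measurableSet_Ioo fun s hs => ?_
        rw [MeasureTheory.integral_mul_const,
          integral_Ioi_rpow_mul_exp_neg_mul hα (sub_pos.2 hs.2), mul_assoc]
    _ = ∫ r in Ioi (0:ℝ), ∫ s in Ioo 0 t, r ^ (α - 1) * exp (-((t - s) * r)) * w s :=
        integral_integral_swap (integrable_rpow_mul_exp_neg_sub_mul_prod hα hα1 hw ht)
    _ = ∫ r in Ioi (0:ℝ), r ^ (α - 1) * expKernelConv r w t := by
        refine setIntegral_congr_fun measurableSet_Ioi fun r _ => ?_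
        simp only [expKernelConv, hIoo, ← MeasureTheory.integral_const_mul, mul_assoc]

lemma integrableOn_Ioi_rpow_mul_min_inv {α T : ℝ} (hα : 0 < α) (hα1 : α < 1) (hT : 0 ≤ T) :
    IntegrableOn (fun r : ℝ => r ^ (α - 1) * min T r⁻¹) (Ioi 0) := by
  have hmeas : AEStronglyMeasurable (fun r : ℝ => r ^ (α - 1) * min T r⁻¹) := by fun_prop
  have hnorm : ∀ r : ℝ, 0 < r → ‖r ^ (α - 1) * min T r⁻¹‖ = r ^ (α - 1) * min T r⁻¹ :=
    fun r hr => Real.norm_of_nonneg (by positivity)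
  rw [← Ioc_union_Ioi_eq_Ioi zero_le_one]
  refine IntegrableOn.union ?_ ?_
  · have hrpow : IntegrableOn (fun r : ℝ => r ^ (α - 1)) (Ioc 0 1) :=
      (intervalIntegrable_iff_integrableOn_Ioc_of_le zero_le_one).1
        (intervalIntegrable_rpow' (by linarith))
    refine (hrpow.const_mul T).mono' hmeas.restrict ?_
    filter_upwards [ae_restrict_mem measurableSet_Ioc] with r hr
    rw [hnorm r hr.1, mul_comm T]
    exact mul_le_mul_of_nonneg_left (min_le_left _ _) (rpow_nonneg hr.1.le _)
  · refine (integrableOn_Ioi_rpow_of_lt (by linarith : α - 2 < -1) one_pos).mono'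
      hmeas.restrict ?_
    filter_upwards [ae_restrict_mem measurableSet_Ioi] with r (hr : 1 < r)
    have hr0 : 0 < r := one_pos.trans hr
    calc ‖r ^ (α - 1) * min T r⁻¹‖ ≤ r ^ (α - 1) * r ^ (-1 : ℝ) := by
          rw [hnorm r hr0, rpow_neg_one]
          exact mul_le_mul_of_nonneg_left (min_le_right _ _) (rpow_nonneg hr0.le _)
      _ = r ^ (α - 2) := by rw [← rpow_add hr0]; ring_nf

lemma integrable_rpow_mul_mul_expKernelConv_prod {α T : ℝ} {w : ℝ → ℝ} (hα : 0 < α)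
    (hα1 : α < 1) (hw : Continuous w) (hT : 0 ≤ T) :
    Integrable (Function.uncurry fun t r => r ^ (α - 1) * (w t * expKernelConv r w t))
      ((volume.restrict (Ioc 0 T)).prod (volume.restrict (Ioi 0))) := by
  obtain ⟨M, hM⟩ :=
    isCompact_Icc.exists_bound_of_continuousOn (hw.continuousOn (s := Icc 0 T))
  have hM0 : 0 ≤ M := (norm_nonneg _).trans (hM 0 ⟨le_rfl, hT⟩)
  have hconv : Measurable fun p : ℝ × ℝ => expKernelConv p.2 w p.1 :=
    ((continuous_expKernelConv hw).comp continuous_swap).measurable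
  refine ((integrable_const (M * M)).mul_prod
    (integrableOn_Ioi_rpow_mul_min_inv hα hα1 hT)).mono' (Measurable.aestronglyMeasurable (by
      change Measurable fun p : ℝ × ℝ => p.2 ^ (α - 1) * (w p.1 * expKernelConv p.2 w p.1)
      fun_prop)) ?_
  rw [Measure.prod_restrict]
  filter_upwards [ae_restrict_mem (measurableSet_Ioc.prod measurableSet_Ioi)]
    with ⟨t, r⟩ ⟨ht, hr⟩
  have hwt : |w t| ≤ M := hM t (Ioc_subset_Icc_self ht)
  have hconvt : |expKernelConv r w t| ≤ M * min T r⁻¹ :=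
    (abs_expKernelConv_le hr ht.1.le fun s hs => hM s ⟨hs.1, hs.2.trans ht.2⟩).trans
      (mul_le_mul_of_nonneg_left (min_le_min_right _ ht.2) hM0)
  simp only [Function.uncurry_apply_pair, Real.norm_eq_abs, abs_mul,
    abs_of_nonneg (rpow_nonneg (le_of_lt hr) _)]
  calc r ^ (α - 1) * (|w t| * |expKernelConv r w t|)
      ≤ r ^ (α - 1) * (M * (M * min T r⁻¹)) :=
        mul_le_mul_of_nonneg_left (mul_le_mul hwt hconvt (abs_nonneg _) hM0)
          (rpow_nonneg (le_of_lt hr) _)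
    _ = M * M * (r ^ (α - 1) * min T r⁻¹) := by ring

theorem integral_mul_integral_sub_rpow_neg_mul_nonneg {α T : ℝ} {w : ℝ → ℝ} (hα : 0 < α)
    (hα1 : α < 1) (hw : Continuous w) (hT : 0 ≤ T) :
    0 ≤ ∫ t in (0:ℝ)..T, w t * ∫ s in (0:ℝ)..t, (t - s) ^ (-α) * w s := by
  have hΓ : 0 < Gamma α := Gamma_pos_of_pos hα
  have hLaplace : ∀ t ∈ Ioc 0 T, w t * ∫ s in (0:ℝ)..t, (t - s) ^ (-α) * w s
      = (Gamma α)⁻¹ * ∫ r in Ioi (0:ℝ), r ^ (α - 1) * (w t * expKernelConv r w t) := by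
    intro t ht
    simp only [mul_left_comm _ (w t), MeasureTheory.integral_const_mul,
      ← Gamma_mul_integral_sub_rpow_neg_mul_eq hα hα1 hw ht.1.le, inv_mul_cancel_left₀ hΓ.ne']
  calc ∫ t in (0:ℝ)..T, w t * ∫ s in (0:ℝ)..t, (t - s) ^ (-α) * w s
      = (Gamma α)⁻¹ * ∫ t in Ioc 0 T, ∫ r in Ioi (0:ℝ),
          r ^ (α - 1) * (w t * expKernelConv r w t) := by
        rw [integral_of_le hT, setIntegral_congr_fun measurableSet_Ioc hLaplace,
          MeasureTheory.integral_const_mul]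
    _ = (Gamma α)⁻¹ * ∫ r in Ioi (0:ℝ),
          r ^ (α - 1) * ∫ t in (0:ℝ)..T, w t * expKernelConv r w t := by
        simp only [integral_of_le hT, MeasureTheory.integral_const_mul,
          integral_integral_swap (integrable_rpow_mul_mul_expKernelConv_prod hα hα1 hw hT)]
    _ ≥ 0 := mul_nonneg (inv_nonneg.2 hΓ.le) (setIntegral_nonneg measurableSet_Ioi fun r hr =>
          mul_nonneg (rpow_nonneg (le_of_lt hr) _)
            (integral_mul_expKernelConv_nonneg hw (le_of_lt hr) hT))

theorem kernel_positive_semidefinite (α : ℝ) (hα : 0 < α) (hα1 : α < 1)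
    (T : ℝ) (hT : 0 < T) (w : ℝ → ℝ) (hw : ContinuousOn w (Set.Icc 0 T)) :
    0 ≤ ∫ t in (0:ℝ)..T,
        w t * ∫ s in (0:ℝ)..t, (t - s) ^ (-α) / Real.Gamma (1 - α) * w s := by
  set v : ℝ → ℝ := fun x => w (projIcc 0 T hT.le x)
  have hv : Continuous v :=
    hw.comp_continuous (continuous_subtype_val.comp continuous_projIcc) fun x =>
      (projIcc 0 T _ x).2
  have hvw : EqOn v w (Icc 0 T) := fun x hx =>
    congrArg w (congrArg Subtype.val (projIcc_of_mem _ hx))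
  have hform : ∫ t in (0:ℝ)..T, w t * ∫ s in (0:ℝ)..t, (t - s) ^ (-α) / Gamma (1 - α) * w s
      = (Gamma (1 - α))⁻¹ *
          ∫ t in (0:ℝ)..T, v t * ∫ s in (0:ℝ)..t, (t - s) ^ (-α) * v s := by
    rw [← intervalIntegral.integral_const_mul]
    refine integral_congr fun t ht => ?_
    rw [uIcc_of_le hT.le] at ht
    have hinner : ∫ s in (0:ℝ)..t, (t - s) ^ (-α) / Gamma (1 - α) * w s
        = (Gamma (1 - α))⁻¹ * ∫ s in (0:ℝ)..t, (t - s) ^ (-α) * v s := by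
      rw [← intervalIntegral.integral_const_mul]
      refine integral_congr fun s hs => ?_
      rw [uIcc_of_le ht.1] at hs
      simp only [hvw ⟨hs.1, hs.2.trans ht.2⟩]
      ring
    simp only [hinner, hvw ht]
    ring
  rw [hform]
  exact mul_nonneg (inv_nonneg.2 (Gamma_pos_of_pos (by linarith)).le)
    (integral_mul_integral_sub_rpow_neg_mul_nonneg hα hα1 hv hT.le)
end

section
/- The time-discrete convex splitting scheme conserves mass: if for each n ≥ 1 the update satisfies Σ_{k=1}^n ā_{n-k}ⁿ (φᵏ - φᵏ⁻¹) = M Δμ^{n-1/2} with periodic boundary conditions and ā₀ⁿ > 0, then ∫_Ω φⁿ dx = ∫_Ω φ⁰ dx for all n, since ∫_Ω Δμ dx = 0. -/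
open MeasureTheory Finset

/-!
Integrating the scheme kills its right-hand side, so the mass increments
`∫ φᵏ - ∫ φᵏ⁻¹` solve a homogeneous lower-triangular system whose diagonal entries `ā₀ⁿ` are
nonzero; forward substitution makes every increment vanish.
-/

theorem eq_zero_of_sum_Icc_mul_eq_zero {R : Type*} [Semiring R] [NoZeroDivisors R]
    (c : ℕ → ℕ → R) (d : ℕ → R) (hdiag : ∀ n ≥ 1, c n 0 ≠ 0)
    (hsum : ∀ n ≥ 1, ∑ k ∈ Icc 1 n, c n (n - k) * d k = 0) :
    ∀ n ≥ 1, d n = 0 := by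
  intro n
  induction n using Nat.strong_induction_on with
  | _ n ih =>
    intro hn
    obtain ⟨m, rfl⟩ : ∃ m, n = m + 1 := ⟨n - 1, by omega⟩
    have hlower : ∑ k ∈ Icc 1 m, c (m + 1) (m + 1 - k) * d k = 0 :=
      sum_eq_zero fun k hk ↦ by
        obtain ⟨hk1, hkm⟩ := mem_Icc.mp hk
        rw [ih k (by omega) hk1, mul_zero]
    have hdiagonal : c (m + 1) 0 * d (m + 1) = 0 := by
      simpa [sum_Icc_succ_top, hlower] using hsum (m + 1) hn
    exact (mul_eq_zero.mp hdiagonal).resolve_left (hdiag _ hn)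

theorem apply_eq_apply_zero_of_sum_Icc_mul_sub_eq_zero {R : Type*} [Ring R] [NoZeroDivisors R]
    (c : ℕ → ℕ → R) (m : ℕ → R) (hdiag : ∀ n ≥ 1, c n 0 ≠ 0)
    (hsum : ∀ n ≥ 1, ∑ k ∈ Icc 1 n, c n (n - k) * (m k - m (k - 1)) = 0) (n : ℕ) :
    m n = m 0 := by
  have hincr := eq_zero_of_sum_Icc_mul_eq_zero c (fun k ↦ m k - m (k - 1)) hdiag hsum
  induction n with
  | zero => rfl
  | succ n ih => rw [← ih, ← sub_eq_zero]; exact hincr (n + 1) n.succ_pos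

theorem integral_sum_mul_sub {Ω ι : Type*} [MeasurableSpace Ω] {ν : Measure Ω}
    (s : Finset ι) (c : ι → ℝ) (f g : ι → Ω → ℝ)
    (hf : ∀ i, Integrable (f i) ν) (hg : ∀ i, Integrable (g i) ν) :
    ∫ x, ∑ i ∈ s, c i * (f i x - g i x) ∂ν = ∑ i ∈ s, c i * (∫ x, f i x ∂ν - ∫ x, g i x ∂ν) := by
  rw [integral_finsetSum (f := fun i x ↦ c i * (f i x - g i x)) s
    fun i _ ↦ ((hf i).sub (hg i)).const_mul (c i)]
  simp only [integral_const_mul, integral_sub (hf _) (hg _)]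

theorem discrete_scheme_mass_conservation_general
    {Ω : Type*} [MeasurableSpace Ω] (ν : Measure Ω)
    (M : ℝ) (φ : ℕ → Ω → ℝ) (Δμ : ℕ → Ω → ℝ) (abar : ℕ → ℕ → ℝ)
    (hφint : ∀ n, Integrable (φ n) ν)
    (habar0 : ∀ n ≥ 1, 0 < abar n 0)
    (hΔμ : ∀ n ≥ 1, ∫ x, Δμ n x ∂ν = 0)
    (hscheme : ∀ n ≥ 1, ∀ x,
        ∑ k ∈ Finset.Icc 1 n, abar n (n - k) * (φ k x - φ (k - 1) x) = M * Δμ n x) :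
    ∀ n, ∫ x, φ n x ∂ν = ∫ x, φ 0 x ∂ν := by
  refine apply_eq_apply_zero_of_sum_Icc_mul_sub_eq_zero abar (fun k ↦ ∫ x, φ k x ∂ν)
    (fun n hn ↦ (habar0 n hn).ne') fun n hn ↦ ?_
  calc ∑ k ∈ Icc 1 n, abar n (n - k) * (∫ x, φ k x ∂ν - ∫ x, φ (k - 1) x ∂ν)
      = ∫ x, ∑ k ∈ Icc 1 n, abar n (n - k) * (φ k x - φ (k - 1) x) ∂ν :=
        (integral_sum_mul_sub _ _ _ _ hφint fun k ↦ hφint (k - 1)).symm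
    _ = ∫ x, M * Δμ n x ∂ν := by simp only [hscheme n hn]
    _ = 0 := by rw [integral_const_mul, hΔμ n hn, mul_zero]

theorem discrete_scheme_mass_conservation
    {Ω : Type*} [MeasurableSpace Ω] (ν : Measure Ω)
    (M : ℝ) (φ : ℕ → Ω → ℝ) (Δμ : ℕ → Ω → ℝ) (abar : ℕ → ℕ → ℝ)
    (hφint : ∀ n, Integrable (φ n) ν)
    (hΔμint : ∀ n, Integrable (Δμ n) ν)
    (habar0 : ∀ n ≥ 1, 0 < abar n 0)
    (hΔμ : ∀ n ≥ 1, ∫ x, Δμ n x ∂ν = 0)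
    (hscheme : ∀ n ≥ 1, ∀ x,
        ∑ k ∈ Finset.Icc 1 n, abar n (n - k) * (φ k x - φ (k - 1) x) = M * Δμ n x) :
    ∀ n, ∫ x, φ n x ∂ν = ∫ x, φ 0 x ∂ν :=
  discrete_scheme_mass_conservation_general ν M φ Δμ abar hφint habar0 hΔμ hscheme
end
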